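/- For a sequence of integers b_i ≥ 2, the series ∑_{ℓ=1}^∞ 2^{ℓ − (b₁+⋯+b_ℓ)} converges and its value equals ?([[b₁,b₂,b₃,…]]), the Minkowski question mark function evaluated at the semi-regular continued fraction [[b₁,b₂,…]]. Equivalently, with regular continued fraction x = [0,a₁,a₂,…], ?(x) = 2^{1−b₁} + 2^{2−(b₁+b₂)} + 2^{3−(b₁+b₂+b₃)} + ⋯ where (b_i) is the semi-regular expansion of x. -/

import Mathlib

/-!
Write `F(b)` for the series and `σb = (b₂, b₃, …)` for the shifted sequence. Peeling off the
first term gives `F(b) = 2^{1-b₁} (1 + F(σb))`, and `?` obeys the same equation: for `0 < y ≤ 1`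

  `?(1/(m - y)) = 2^{1-m} (1 + ?(y))`,

which follows from the regular continued fraction recursion `?(x) = 2^{1-a₁} (1 - ?(x')/2)`
(`x'` the fractional part of `1/x`) combined with the reflection `?(1 - y) = 1 - ?(y)`.
As `x = 1/(b₁ - y)` with `y = [[b₂, b₃, …]]` and `2^{1-b₁} ≤ 1/2`, the difference
`|F(b) - ?(x)|` at least halves under each shift; being bounded by `3`, it vanishes.
-/

open scoped BigOperators

/-- The Minkowski question mark function on `[0,1]`, defined through the
alternating series over the partial denominators of the regular continued
fraction expansion of `x`. -/
noncomputable def questionMark (x : ℝ) : ℝ :=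
  if x = 1 then 1
  else ∑' k : ℕ,
    if ((GenContFract.of x).partDens.get? k).isSome then
      (-1 : ℝ) ^ k *
        (2 : ℝ) ^ ((1 : ℝ) -
          ∑ i ∈ Finset.range (k + 1), ((GenContFract.of x).partDens.get? i).getD 0)
    else 0

/-- Finite semi-regular continued fraction `[[b₁,…,b_m]] = 1/(b₁ - [[b₂,…,b_m]])`,
with the empty continued fraction equal to `0` (so `[[b]] = 1/b`). -/
noncomputable def srcf : List ℝ → ℝ
  | [] => 0
  | b :: t => 1 / (b - srcf t)

open Filter Topology

namespace GenContFract

theorem of_s_get?_fract {K : Type*} [Field K] [LinearOrder K] [IsStrictOrderedRing K]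
    [FloorRing K] (v : K) (n : ℕ) :
    (GenContFract.of (Int.fract v)).s.get? n = (GenContFract.of v).s.get? n := by
  rcases eq_or_ne (Int.fract v) 0 with h | h
  · obtain ⟨a, rfl⟩ : ∃ a : ℤ, v = a := ⟨⌊v⌋, eq_of_sub_eq_zero h⟩
    rw [Int.fract_intCast, ← Int.cast_zero, of_s_of_int, of_s_of_int]
  · cases n with
    | zero =>
      have h' : Int.fract (Int.fract v) ≠ 0 := by rwa [Int.fract_fract]
      exact (of_s_head h').trans ((of_s_head h).trans (by rw [Int.fract_fract])).symm
    | succ n => rw [of_s_succ, of_s_succ, Int.fract_fract]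

end GenContFract

open GenContFract

namespace QuestionMark

/-- The `k`-th partial denominator `a_{k+1}` of the regular continued fraction of `x`. -/
noncomputable def partDen (x : ℝ) (k : ℕ) : Option ℝ := (GenContFract.of x).partDens.get? k

theorem partDen_intCast (a : ℤ) (k : ℕ) : partDen a k = none := by
  simp [partDen, partDens, of_s_of_int]

theorem partDen_zero {x : ℝ} (h0 : 0 < x) (h1 : x < 1) : partDen x 0 = some ⌊x⁻¹⌋ := by
  have hx : Int.fract x = x := Int.fract_eq_self.2 ⟨h0.le, h1⟩
  have hhead : (GenContFract.of x).s.head = some ⟨1, ⌊x⁻¹⌋⟩ := by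
    simpa only [hx] using of_s_head (K := ℝ) (v := x) (by rw [hx]; exact h0.ne')
  simp [partDen, partDens, show (GenContFract.of x).s.get? 0 = _ from hhead]

theorem partDen_succ {x : ℝ} (h0 : 0 < x) (h1 : x < 1) (k : ℕ) :
    partDen x (k + 1) = partDen (Int.fract x⁻¹) k := by
  have hx : Int.fract x = x := Int.fract_eq_self.2 ⟨h0.le, h1⟩
  simp only [partDen, partDens, Stream'.Seq.map_get?, of_s_succ, hx, of_s_get?_fract]

theorem sum_partDen_ge {x : ℝ} {k : ℕ} (h : (partDen x k).isSome) :
    (k : ℝ) + 1 ≤ ∑ i ∈ Finset.range (k + 1), (partDen x i).getD 0 := by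
  obtain ⟨d, hd⟩ := Option.isSome_iff_exists.mp h
  calc (k : ℝ) + 1 = ∑ _i ∈ Finset.range (k + 1), (1 : ℝ) := by simp
    _ ≤ _ := Finset.sum_le_sum fun i hi => by
      obtain ⟨di, hdi⟩ :=
        Stream'.Seq.ge_stable (GenContFract.of x).partDens (Finset.mem_range_succ_iff.mp hi) hd
      simpa [partDen, hdi] using of_one_le_get?_partDen hdi

noncomputable def altTerm (x : ℝ) (k : ℕ) : ℝ :=
  if (partDen x k).isSome then
    (-1 : ℝ) ^ k * (2 : ℝ) ^ ((1 : ℝ) - ∑ i ∈ Finset.range (k + 1), (partDen x i).getD 0)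
  else 0

-- Agrees with `questionMark` except at `1`, whose expansion has no partial denominators.
noncomputable def altSeries (x : ℝ) : ℝ := ∑' k, altTerm x k

theorem questionMark_eq_altSeries {x : ℝ} (hx : x ≠ 1) : questionMark x = altSeries x := by
  rw [questionMark, if_neg hx]
  rfl

theorem altSeries_zero : altSeries 0 = 0 := by
  have h (k : ℕ) : partDen 0 k = none := by simpa using partDen_intCast 0 k
  simp [altSeries, altTerm, h]

theorem abs_altTerm_le (x : ℝ) (k : ℕ) : |altTerm x k| ≤ (1 / 2 : ℝ) ^ k := by
  unfold altTerm
  split_ifs with h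
  · rw [abs_mul, abs_pow, abs_neg, abs_one, one_pow, one_mul, abs_of_pos (by positivity),
      one_div, inv_pow, ← Real.rpow_natCast, ← Real.rpow_neg zero_le_two]
    exact Real.rpow_le_rpow_of_exponent_le one_le_two (by linarith [sum_partDen_ge h])
  · simp

theorem summable_altTerm (x : ℝ) : Summable (altTerm x) :=
  .of_norm_bounded summable_geometric_two (abs_altTerm_le x)

theorem abs_altSeries_le (x : ℝ) : |altSeries x| ≤ 2 :=
  tsum_of_norm_bounded (f := altTerm x) hasSum_geometric_two (abs_altTerm_le x)

theorem altSeries_eq {x : ℝ} (h0 : 0 < x) (h1 : x < 1) :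
    altSeries x = (2 : ℝ) ^ (1 - ⌊x⁻¹⌋) * (1 - altSeries (Int.fract x⁻¹) / 2) := by
  have hsum (k : ℕ) : ∑ i ∈ Finset.range (k + 2), (partDen x i).getD 0
      = ⌊x⁻¹⌋ + ∑ i ∈ Finset.range (k + 1), (partDen (Int.fract x⁻¹) i).getD 0 := by
    simp [Finset.sum_range_succ' _ (k + 1), partDen_succ h0 h1, partDen_zero h0 h1, add_comm]
  have hpow (s : ℝ) :
      (2 : ℝ) ^ ((1 : ℝ) - (⌊x⁻¹⌋ + s)) = 2 ^ (-⌊x⁻¹⌋) * 2 ^ (1 - s) := by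
    rw [← Real.rpow_intCast, ← Real.rpow_add two_pos]
    push_cast
    ring_nf
  have hterm (k : ℕ) :
      altTerm x (k + 1) = -((2 : ℝ) ^ (-⌊x⁻¹⌋) * altTerm (Int.fract x⁻¹) k) := by
    unfold altTerm
    rw [partDen_succ h0 h1]
    split_ifs
    · rw [hsum, hpow, pow_succ]
      ring
    · simp
  have hterm0 : altTerm x 0 = 2 ^ (1 - ⌊x⁻¹⌋) := by
    simp [altTerm, partDen_zero h0 h1, ← Real.rpow_intCast]
  rw [altSeries, (summable_altTerm x).tsum_eq_zero_add, tsum_congr hterm, tsum_neg, tsum_mul_left,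
    ← altSeries, hterm0, sub_eq_neg_add, zpow_add₀ two_ne_zero, zpow_one]
  ring

theorem altSeries_eq_of_inv_eq {x r : ℝ} {n : ℤ} (h0 : 0 < x) (h1 : x < 1)
    (hinv : x⁻¹ = n + r) (hr0 : 0 ≤ r) (hr1 : r < 1) :
    altSeries x = (2 : ℝ) ^ (1 - n) * (1 - altSeries r / 2) := by
  have hn : ⌊x⁻¹⌋ = n := Int.floor_eq_iff.2 ⟨by linarith, by linarith⟩
  have hr : Int.fract x⁻¹ = r := by rw [Int.fract, hn, hinv]; ring
  rw [altSeries_eq h0 h1, hn, hr]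

theorem altSeries_one_sub_of_lt_half {y : ℝ} (h0 : 0 < y) (h2 : y < 1 / 2) :
    altSeries (1 - y) = 1 - altSeries y := by
  have h1y : 0 < 1 - y := by linarith
  have hz0 : 0 < y / (1 - y) := by positivity
  have hz1 : y / (1 - y) < 1 := (div_lt_one h1y).2 (by linarith)
  -- `y / (1 - y)` has the expansion of `y` with the first partial denominator lowered by one
  have hz : altSeries (y / (1 - y)) = 2 * altSeries y := by
    have hinv : (y / (1 - y))⁻¹ = ((⌊y⁻¹⌋ - 1 : ℤ) : ℝ) + Int.fract y⁻¹ := by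
      rw [inv_div, sub_div, div_self h0.ne', one_div]
      push_cast
      linarith [Int.floor_add_fract y⁻¹]
    rw [altSeries_eq_of_inv_eq hz0 hz1 hinv (Int.fract_nonneg _) (Int.fract_lt_one _),
      altSeries_eq h0 (by linarith), show 1 - (⌊y⁻¹⌋ - 1) = 1 - ⌊y⁻¹⌋ + 1 by ring,
      zpow_add_one₀ two_ne_zero]
    ring
  have hinv : (1 - y)⁻¹ = ((1 : ℤ) : ℝ) + y / (1 - y) := by
    field_simp
    ring
  rw [altSeries_eq_of_inv_eq h1y (by linarith) hinv hz0.le hz1, hz]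
  norm_num

theorem altSeries_one_sub {y : ℝ} (h0 : 0 < y) (h1 : y < 1) :
    altSeries (1 - y) = 1 - altSeries y := by
  rcases lt_trichotomy y (1 / 2) with h | rfl | h
  · exact altSeries_one_sub_of_lt_half h0 h
  · have : altSeries (1 / 2) = 1 / 2 := by
      rw [altSeries_eq_of_inv_eq (n := 2) (r := 0) (by norm_num) (by norm_num) (by norm_num)
        le_rfl one_pos, altSeries_zero]
      norm_num
    norm_num [this]
  · have := altSeries_one_sub_of_lt_half (y := 1 - y) (by linarith) (by linarith)
    rw [sub_sub_cancel] at this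
    linarith

theorem questionMark_one_div_sub {m : ℤ} (hm : 2 ≤ m) {y : ℝ} (h0 : 0 < y) (h1 : y ≤ 1) :
    questionMark (1 / (m - y)) = (2 : ℝ) ^ (1 - m) * (1 + questionMark y) := by
  have hm' : (2 : ℝ) ≤ m := by exact_mod_cast hm
  have hrefl : altSeries (1 - y) = 1 - questionMark y := by
    rcases h1.lt_or_eq with h1 | rfl
    · rw [altSeries_one_sub h0 h1, questionMark_eq_altSeries h1.ne]
    · simp [altSeries_zero, questionMark]
  rcases eq_or_lt_of_le (show 1 ≤ (m : ℝ) - y by linarith) with heq | hlt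
  · obtain rfl : m = 2 := le_antisymm (by exact_mod_cast (by linarith : (m : ℝ) ≤ 2)) hm
    obtain rfl : y = 1 := by push_cast at heq; linarith
    norm_num [questionMark]
  · have hx0 : 0 < 1 / (m - y) := by positivity
    have hx1 : 1 / (m - y) < 1 := (div_lt_one (by linarith)).2 hlt
    have hinv : (1 / (m - y))⁻¹ = ((m - 1 : ℤ) : ℝ) + (1 - y) := by
      rw [one_div, inv_inv]
      push_cast
      ring
    rw [questionMark_eq_altSeries hx1.ne,
      altSeries_eq_of_inv_eq hx0 hx1 hinv (by linarith) (by linarith), hrefl,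
      show 1 - (m - 1) = 1 - m + 1 by ring, zpow_add_one₀ two_ne_zero]
    ring

theorem abs_questionMark_le (x : ℝ) : |questionMark x| ≤ 2 := by
  by_cases hx : x = 1
  · norm_num [questionMark, hx]
  · rw [questionMark_eq_altSeries hx]
    exact abs_altSeries_le x

noncomputable def semiregularTerm (b : ℕ → ℤ) (ℓ : ℕ) : ℝ :=
  (2 : ℝ) ^ (((ℓ : ℤ) + 1) - ∑ i ∈ Finset.range (ℓ + 1), b i)

noncomputable def srcfTrunc (b : ℕ → ℤ) (ℓ : ℕ) : ℝ :=
  srcf (List.ofFn fun i : Fin ℓ => (b i : ℝ))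

section Semiregular

variable {b : ℕ → ℤ}

theorem semiregularTerm_le (hb : ∀ i, 2 ≤ b i) (ℓ : ℕ) :
    semiregularTerm b ℓ ≤ 1 / 2 / 2 ^ ℓ := by
  have hsum : 2 * ((ℓ : ℤ) + 1) ≤ ∑ i ∈ Finset.range (ℓ + 1), b i := by
    have := Finset.card_nsmul_le_sum (Finset.range (ℓ + 1)) b 2 fun i _ => hb i
    simp only [Finset.card_range, nsmul_eq_mul, Nat.cast_add, Nat.cast_one] at this
    linarith
  calc semiregularTerm b ℓ ≤ (2 : ℝ) ^ (-((ℓ : ℤ) + 1)) :=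
        zpow_le_zpow_right₀ one_le_two (by linarith)
    _ = 1 / 2 / 2 ^ ℓ := by
        rw [zpow_neg, zpow_add_one₀ two_ne_zero, zpow_natCast]
        ring

theorem summable_semiregularTerm (hb : ∀ i, 2 ≤ b i) : Summable (semiregularTerm b) :=
  .of_nonneg_of_le (fun _ => (zpow_pos two_pos _).le) (semiregularTerm_le hb)
    (summable_geometric_two' 1)

theorem abs_tsum_semiregularTerm_le_one (hb : ∀ i, 2 ≤ b i) :
    |∑' ℓ, semiregularTerm b ℓ| ≤ 1 := by
  rw [abs_of_nonneg (tsum_nonneg fun _ => (zpow_pos two_pos _).le), ← tsum_geometric_two' 1]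
  exact (summable_semiregularTerm hb).tsum_le_tsum (semiregularTerm_le hb)
    (summable_geometric_two' 1)

theorem semiregularTerm_succ (ℓ : ℕ) :
    semiregularTerm b (ℓ + 1) = 2 ^ (1 - b 0) * semiregularTerm (fun i => b (i + 1)) ℓ := by
  rw [semiregularTerm, semiregularTerm, ← zpow_add₀ two_ne_zero, Finset.sum_range_succ' b]
  push_cast
  ring_nf

theorem tsum_semiregularTerm (hb : ∀ i, 2 ≤ b i) :
    ∑' ℓ, semiregularTerm b ℓ
      = 2 ^ (1 - b 0) * (1 + ∑' ℓ, semiregularTerm (fun i => b (i + 1)) ℓ) := by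
  rw [(summable_semiregularTerm hb).tsum_eq_zero_add, tsum_congr semiregularTerm_succ,
    tsum_mul_left, mul_add, mul_one]
  simp [semiregularTerm]

theorem srcf_mem_Icc {l : List ℝ} (hl : ∀ r ∈ l, 2 ≤ r) : srcf l ∈ Set.Icc 0 1 := by
  induction l with
  | nil => simp [srcf]
  | cons c t ih =>
    have hc := hl c List.mem_cons_self
    obtain ⟨h0, h1⟩ := ih fun r hr => hl r (List.mem_cons_of_mem c hr)
    have hpos : 0 < c - srcf t := by linarith
    exact ⟨by rw [srcf]; positivity, by rw [srcf, div_le_one hpos]; linarith⟩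

theorem srcfTrunc_succ (ℓ : ℕ) :
    srcfTrunc b (ℓ + 1) = 1 / (b 0 - srcfTrunc (fun i => b (i + 1)) ℓ) := by
  rw [srcfTrunc, List.ofFn_succ]
  rfl

theorem srcfTrunc_mem_Icc (hb : ∀ i, 2 ≤ b i) (ℓ : ℕ) : srcfTrunc b ℓ ∈ Set.Icc 0 1 :=
  srcf_mem_Icc fun r hr => by
    obtain ⟨i, rfl⟩ := List.mem_ofFn.1 hr
    exact_mod_cast hb i

theorem one_div_le_srcfTrunc_succ (hb : ∀ i, 2 ≤ b i) (ℓ : ℕ) :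
    1 / (b 0 : ℝ) ≤ srcfTrunc b (ℓ + 1) := by
  obtain ⟨h0, h1⟩ := srcfTrunc_mem_Icc (fun i => hb (i + 1)) ℓ
  have hb0 : (2 : ℝ) ≤ b 0 := by exact_mod_cast hb 0
  rw [srcfTrunc_succ]
  exact one_div_le_one_div_of_le (by linarith) (by linarith)

theorem mem_Ioc_of_tendsto_srcfTrunc (hb : ∀ i, 2 ≤ b i) {x : ℝ}
    (hx : Tendsto (srcfTrunc b) atTop (𝓝 x)) : x ∈ Set.Ioc 0 1 := by
  have hb0 : (0 : ℝ) < 1 / b 0 := by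
    have : (2 : ℝ) ≤ b 0 := by exact_mod_cast hb 0
    positivity
  exact ⟨hb0.trans_le <| ge_of_tendsto (hx.comp (tendsto_add_atTop_nat 1))
      (.of_forall (one_div_le_srcfTrunc_succ hb)),
    le_of_tendsto hx (.of_forall fun ℓ => (srcfTrunc_mem_Icc hb ℓ).2)⟩

theorem tendsto_srcfTrunc_shift (hb : ∀ i, 2 ≤ b i) {x : ℝ}
    (hx : Tendsto (srcfTrunc b) atTop (𝓝 x)) :
    Tendsto (srcfTrunc fun i => b (i + 1)) atTop (𝓝 (b 0 - x⁻¹)) := by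
  have hx0 := (mem_Ioc_of_tendsto_srcfTrunc hb hx).1
  have h (ℓ : ℕ) : srcfTrunc (fun i => b (i + 1)) ℓ = b 0 - (srcfTrunc b (ℓ + 1))⁻¹ := by
    rw [srcfTrunc_succ, one_div, inv_inv, sub_sub_cancel]
  rw [funext h]
  exact tendsto_const_nhds.sub ((hx.comp (tendsto_add_atTop_nat 1)).inv₀ hx0.ne')

theorem abs_tsum_semiregularTerm_sub_questionMark_le (hb : ∀ i, 2 ≤ b i) {x : ℝ}
    (hx : Tendsto (srcfTrunc b) atTop (𝓝 x)) (n : ℕ) :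
    |∑' ℓ, semiregularTerm b ℓ - questionMark x| ≤ 3 / 2 ^ n := by
  induction n generalizing b x with
  | zero =>
    calc |∑' ℓ, semiregularTerm b ℓ - questionMark x|
        ≤ |∑' ℓ, semiregularTerm b ℓ| + |questionMark x| := abs_sub _ _
      _ ≤ 3 / 2 ^ 0 := by
        linarith [abs_tsum_semiregularTerm_le_one hb, abs_questionMark_le x]
  | succ n ih =>
    have hy := tendsto_srcfTrunc_shift hb hx
    obtain ⟨hy0, hy1⟩ := mem_Ioc_of_tendsto_srcfTrunc (fun i => hb (i + 1)) hy
    have hQ := questionMark_one_div_sub (hb 0) hy0 hy1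
    rw [sub_sub_cancel, one_div, inv_inv] at hQ
    have hfactor : (2 : ℝ) ^ (1 - b 0) ≤ 1 / 2 := by
      rw [one_div, ← zpow_neg_one]
      exact zpow_le_zpow_right₀ one_le_two (by linarith [hb 0])
    calc |∑' ℓ, semiregularTerm b ℓ - questionMark x|
        = 2 ^ (1 - b 0) * |∑' ℓ, semiregularTerm (fun i => b (i + 1)) ℓ
            - questionMark (b 0 - x⁻¹)| := by
          rw [tsum_semiregularTerm hb, hQ, ← mul_sub,
            abs_mul, abs_of_pos (by positivity), add_sub_add_left_eq_sub]
      _ ≤ 1 / 2 * (3 / 2 ^ n) :=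
          mul_le_mul hfactor (ih (fun i => hb (i + 1)) hy) (abs_nonneg _) (by norm_num)
      _ = 3 / 2 ^ (n + 1) := by ring

end Semiregular

end QuestionMark

/-- For integers `b_i ≥ 2`, the series `∑_{ℓ≥1} 2^{ℓ−(b₁+⋯+b_ℓ)}` converges and its
value is `?(x)`, where `x = [[b₁,b₂,…]]` is the value of the infinite semi-regular
continued fraction (the limit of its finite truncations). -/
theorem questionMark_semiregular (b : ℕ → ℤ) (hb : ∀ i, 2 ≤ b i) (x : ℝ)
    (hx : Filter.Tendsto (fun ℓ : ℕ => srcf (List.ofFn fun i : Fin ℓ => (b i : ℝ)))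
      Filter.atTop (nhds x)) :
    Summable (fun ℓ : ℕ => (2 : ℝ) ^ (((ℓ : ℤ) + 1) - ∑ i ∈ Finset.range (ℓ + 1), b i)) ∧
    ∑' ℓ : ℕ, (2 : ℝ) ^ (((ℓ : ℤ) + 1) - ∑ i ∈ Finset.range (ℓ + 1), b i)
      = questionMark x := by
  refine ⟨QuestionMark.summable_semiregularTerm hb, ?_⟩
  have hlim : Tendsto (fun n : ℕ => (3 : ℝ) / 2 ^ n) atTop (𝓝 0) :=
    tendsto_const_nhds.div_atTop (tendsto_pow_atTop_atTop_of_one_lt one_lt_two)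
  have hdist := ge_of_tendsto' hlim
    (QuestionMark.abs_tsum_semiregularTerm_sub_questionMark_le hb hx)
  exact sub_eq_zero.1 (abs_nonpos_iff.1 hdist)
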